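/- Let ε be a real random variable with E ε = 0, σ² = E ε² and v = E ε⁴ < ∞, and let b be a constant with |b| ≤ τ/2, τ > 0. Set ξ = ψ_τ(b + ε). Then σ² − 4(v + σ⁴)/τ² ≤ Var(ξ) ≤ σ². -/

import Mathlib

/-!
On `[-τ, τ]` the truncation `ψ_τ` is the identity, and everywhere it is the 1-Lipschitz projection
onto `[-τ, τ]`. Put `ξ = ψ_τ(b + ε)` and `s = τ - |b|`. Truncation is inactive when `|ε| ≤ s`;
otherwise `s ≤ |ε|` upgrades the trivial bounds `|ξ - (b + ε)| ≤ |ε|` and `ε² - (ξ - b)² ≤ ε²`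
to `ε² / s` and `ε⁴ / s²`. Hence `E(ξ - b)² ≥ σ² - v / s²`, while the bias
`|Eξ - b| = |E(ξ - b - ε)|` is at most `σ² / s`; since `Var ξ = E(ξ - b)² - (Eξ - b)²` this gives
the lower bound, and `s ≥ τ / 2` turns it into the stated one. The upper bound is
`Var ξ ≤ E(ξ - b)² ≤ E ε²`.
-/

open MeasureTheory

/-- Truncation operator ψ_τ(u) = sign(u)·min(|u|, τ). -/
noncomputable def psi (τ u : ℝ) : ℝ := Real.sign u * min |u| τ

open ProbabilityTheory

lemma abs_le_sq_div {s e : ℝ} (hs : 0 < s) (h : s ≤ |e|) : |e| ≤ e ^ 2 / s := by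
  rw [le_div_iff₀ hs, ← sq_abs]
  nlinarith [abs_nonneg e]

section Truncation

variable {τ : ℝ}

lemma psi_eq_max_min (hτ : 0 ≤ τ) (u : ℝ) : psi τ u = max (-τ) (min τ u) := by
  unfold psi
  rcases lt_trichotomy u 0 with hu | rfl | hu
  · rw [Real.sign_of_neg hu, abs_of_neg hu, min_eq_right (hu.le.trans hτ), neg_one_mul,
      ← max_neg_neg, neg_neg, max_comm]
  · simp [hτ]
  · rw [Real.sign_of_pos hu, abs_of_pos hu, one_mul, min_comm,
      max_eq_right ((neg_nonpos.mpr hτ).trans (le_min hτ hu.le))]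

lemma continuous_psi (hτ : 0 ≤ τ) : Continuous (psi τ) := by
  rw [funext (psi_eq_max_min hτ)]
  fun_prop

lemma abs_psi_le (hτ : 0 ≤ τ) (u : ℝ) : |psi τ u| ≤ τ := by
  rw [psi_eq_max_min hτ, abs_le]
  exact ⟨le_max_left _ _, max_le (by linarith) (min_le_left _ _)⟩

lemma psi_of_abs_le {u : ℝ} (h : |u| ≤ τ) : psi τ u = u := by
  obtain ⟨hl, hr⟩ := abs_le.mp h
  rw [psi_eq_max_min ((abs_nonneg u).trans h), min_eq_right hr, max_eq_right hl]

lemma abs_psi_sub_psi_le (hτ : 0 ≤ τ) (u v : ℝ) : |psi τ u - psi τ v| ≤ |u - v| := by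
  rw [psi_eq_max_min hτ, psi_eq_max_min hτ, max_comm, max_comm (-τ)]
  refine (abs_max_sub_max_le_abs _ _ _).trans ?_
  rw [min_comm, min_comm τ]
  simpa using abs_min_sub_min_le_max u τ v τ

variable {b : ℝ}

lemma abs_psi_sub_le (hb : |b| ≤ τ) (u : ℝ) : |psi τ u - b| ≤ |u - b| := by
  simpa [psi_of_abs_le hb] using abs_psi_sub_psi_le ((abs_nonneg b).trans hb) u b

-- `ψ_τ u` is the point of `[-τ, τ]` nearest to `u`.
lemma abs_psi_sub_self_le (hb : |b| ≤ τ) (u : ℝ) : |psi τ u - u| ≤ |u - b| := by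
  obtain ⟨hbl, hbr⟩ := abs_le.mp hb
  rw [psi_eq_max_min ((abs_nonneg b).trans hb)]
  rcases le_total τ u with hu | hu
  · rw [min_eq_left hu, max_eq_right (by linarith), abs_of_nonpos (by linarith),
      abs_of_nonneg (by linarith)]
    linarith
  rcases le_total u (-τ) with hu' | hu'
  · rw [min_eq_right hu, max_eq_left hu', abs_of_nonneg (by linarith),
      abs_of_nonpos (by linarith)]
    linarith
  · rw [min_eq_right hu, max_eq_right hu', sub_self, abs_zero]
    exact abs_nonneg _

lemma sq_psi_add_sub_le (hb : |b| ≤ τ) (e : ℝ) : (psi τ (b + e) - b) ^ 2 ≤ e ^ 2 := by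
  simpa using sq_le_sq.mpr (abs_psi_sub_le hb (b + e))

lemma abs_psi_add_sub_le (hs : 0 < τ - |b|) (e : ℝ) :
    |psi τ (b + e) - (b + e)| ≤ e ^ 2 / (τ - |b|) := by
  by_cases he : |e| ≤ τ - |b|
  · rw [psi_of_abs_le ((abs_add_le b e).trans (by linarith)), sub_self, abs_zero]
    positivity
  calc |psi τ (b + e) - (b + e)| ≤ |b + e - b| := abs_psi_sub_self_le (by linarith) _
    _ = |e| := by rw [add_sub_cancel_left]
    _ ≤ e ^ 2 / (τ - |b|) := abs_le_sq_div hs (not_le.mp he).le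

lemma sq_sub_sq_psi_add_sub_le (hs : 0 < τ - |b|) (e : ℝ) :
    e ^ 2 - (psi τ (b + e) - b) ^ 2 ≤ e ^ 4 / (τ - |b|) ^ 2 := by
  by_cases he : |e| ≤ τ - |b|
  · rw [psi_of_abs_le ((abs_add_le b e).trans (by linarith)), add_sub_cancel_left, sub_self]
    positivity
  calc e ^ 2 - (psi τ (b + e) - b) ^ 2 ≤ |e| ^ 2 := by
        rw [sq_abs]; exact sub_le_self _ (sq_nonneg _)
    _ ≤ (e ^ 2 / (τ - |b|)) ^ 2 := by gcongr; exact abs_le_sq_div hs (not_le.mp he).le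
    _ = e ^ 4 / (τ - |b|) ^ 2 := by rw [div_pow, ← pow_mul]

end Truncation

section Variance

variable {Ω : Type*} [MeasurableSpace Ω] {μ : Measure Ω} [IsProbabilityMeasure μ]
  {ε : Ω → ℝ} {τ b : ℝ}

lemma memLp_psi_comp (hτ : 0 ≤ τ) {f : Ω → ℝ} (hf : AEStronglyMeasurable f μ) (p : ENNReal) :
    MemLp (fun ω => psi τ (f ω)) p μ :=
  .of_bound ((continuous_psi hτ).comp_aestronglyMeasurable hf) τ
    (ae_of_all _ fun ω => abs_psi_le hτ (f ω))

lemma memLp_psi_add_sub (hτ : 0 ≤ τ) (hε : AEStronglyMeasurable ε μ) :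
    MemLp (fun ω => psi τ (b + ε ω) - b) 2 μ :=
  (memLp_psi_comp hτ (hε.const_add b) 2).sub (memLp_const b)

lemma variance_psi_add_eq (hτ : 0 ≤ τ) (hε : AEStronglyMeasurable ε μ) :
    Var[fun ω => psi τ (b + ε ω); μ]
      = ∫ ω, (psi τ (b + ε ω) - b) ^ 2 ∂μ - (∫ ω, (psi τ (b + ε ω) - b) ∂μ) ^ 2 := by
  rw [← variance_sub_const (memLp_psi_comp hτ (hε.const_add b) 2).1 b,
    variance_eq_sub (memLp_psi_add_sub hτ hε)]
  rfl

lemma integral_sq_psi_add_sub_le (hb : |b| ≤ τ) (hε : AEStronglyMeasurable ε μ)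
    (h2 : Integrable (fun ω => ε ω ^ 2) μ) :
    ∫ ω, (psi τ (b + ε ω) - b) ^ 2 ∂μ ≤ ∫ ω, ε ω ^ 2 ∂μ :=
  integral_mono (memLp_psi_add_sub ((abs_nonneg b).trans hb) hε).integrable_sq h2
    fun ω => sq_psi_add_sub_le hb (ε ω)

lemma integral_sq_sub_div_le_integral_sq_psi_add_sub (hs : 0 < τ - |b|)
    (hε : AEStronglyMeasurable ε μ) (h2 : Integrable (fun ω => ε ω ^ 2) μ)
    (h4 : Integrable (fun ω => ε ω ^ 4) μ) :
    (∫ ω, ε ω ^ 2 ∂μ) - (∫ ω, ε ω ^ 4 ∂μ) / (τ - |b|) ^ 2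
      ≤ ∫ ω, (psi τ (b + ε ω) - b) ^ 2 ∂μ := by
  have hτ : 0 ≤ τ := by linarith [abs_nonneg b]
  have hξ := (memLp_psi_add_sub (b := b) hτ hε).integrable_sq
  have := integral_mono (h2.sub hξ) (h4.div_const _) fun ω => sq_sub_sq_psi_add_sub_le hs (ε ω)
  rw [integral_sub' h2 hξ, integral_div] at this
  linarith

lemma abs_integral_psi_add_sub_le (hs : 0 < τ - |b|) (h1 : Integrable ε μ)
    (h2 : Integrable (fun ω => ε ω ^ 2) μ) (hzero : ∫ ω, ε ω ∂μ = 0) :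
    |∫ ω, (psi τ (b + ε ω) - b) ∂μ| ≤ (∫ ω, ε ω ^ 2 ∂μ) / (τ - |b|) := by
  have hτ : 0 ≤ τ := by linarith [abs_nonneg b]
  have hξ := (memLp_psi_add_sub (b := b) hτ h1.1).integrable one_le_two
  have hshift : ∫ ω, (psi τ (b + ε ω) - b) ∂μ = ∫ ω, (psi τ (b + ε ω) - (b + ε ω)) ∂μ := by
    simp_rw [← sub_sub]
    rw [integral_sub hξ h1, hzero, sub_zero]
  calc |∫ ω, (psi τ (b + ε ω) - b) ∂μ|
      ≤ ∫ ω, |psi τ (b + ε ω) - (b + ε ω)| ∂μ := hshift ▸ abs_integral_le_integral_abs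
    _ ≤ ∫ ω, ε ω ^ 2 / (τ - |b|) ∂μ := by
      refine integral_mono ?_ (h2.div_const _) fun ω => abs_psi_add_sub_le hs (ε ω)
      simpa only [Pi.sub_apply, sub_sub] using (hξ.sub h1).abs
    _ = (∫ ω, ε ω ^ 2 ∂μ) / (τ - |b|) := integral_div _ _

lemma variance_psi_add_le (hb : |b| ≤ τ) (hε : AEStronglyMeasurable ε μ)
    (h2 : Integrable (fun ω => ε ω ^ 2) μ) :
    Var[fun ω => psi τ (b + ε ω); μ] ≤ ∫ ω, ε ω ^ 2 ∂μ := by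
  rw [variance_psi_add_eq ((abs_nonneg b).trans hb) hε]
  linarith [integral_sq_psi_add_sub_le hb hε h2, sq_nonneg (∫ ω, (psi τ (b + ε ω) - b) ∂μ)]

lemma integral_sq_sub_div_le_variance_psi_add (hb : |b| < τ) (h1 : Integrable ε μ)
    (h2 : Integrable (fun ω => ε ω ^ 2) μ) (h4 : Integrable (fun ω => ε ω ^ 4) μ)
    (hzero : ∫ ω, ε ω ∂μ = 0) :
    (∫ ω, ε ω ^ 2 ∂μ) - ((∫ ω, ε ω ^ 4 ∂μ) + (∫ ω, ε ω ^ 2 ∂μ) ^ 2) / (τ - |b|) ^ 2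
      ≤ Var[fun ω => psi τ (b + ε ω); μ] := by
  have hs : 0 < τ - |b| := sub_pos.mpr hb
  have hbias_sq : (∫ ω, (psi τ (b + ε ω) - b) ∂μ) ^ 2
      ≤ (∫ ω, ε ω ^ 2 ∂μ) ^ 2 / (τ - |b|) ^ 2 := by
    rw [← div_pow, ← sq_abs]
    exact pow_le_pow_left₀ (abs_nonneg _) (abs_integral_psi_add_sub_le hs h1 h2 hzero) 2
  rw [variance_psi_add_eq ((abs_nonneg b).trans hb.le) h1.1, add_div]
  linarith [integral_sq_sub_div_le_integral_sq_psi_add_sub hs h1.1 h2 h4]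

end Variance

theorem stmt16_general {Ω : Type*} [MeasurableSpace Ω] (μ : Measure Ω) [IsProbabilityMeasure μ]
    (ε : Ω → ℝ)
    (h1 : Integrable ε μ) (h2 : Integrable (fun ω => (ε ω) ^ 2) μ)
    (h4 : Integrable (fun ω => (ε ω) ^ 4) μ)
    (hzero : ∫ ω, ε ω ∂μ = 0)
    (τ b : ℝ) (hτ : 0 < τ) (hb : |b| ≤ τ / 2) :
    (∫ ω, (ε ω) ^ 2 ∂μ) - 4 * ((∫ ω, (ε ω) ^ 4 ∂μ) + (∫ ω, (ε ω) ^ 2 ∂μ) ^ 2) / τ ^ 2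
        ≤ (∫ ω, (psi τ (b + ε ω)) ^ 2 ∂μ) - (∫ ω, psi τ (b + ε ω) ∂μ) ^ 2 ∧
      (∫ ω, (psi τ (b + ε ω)) ^ 2 ∂μ) - (∫ ω, psi τ (b + ε ω) ∂μ) ^ 2
        ≤ ∫ ω, (ε ω) ^ 2 ∂μ := by
  have hbτ : |b| < τ := by linarith
  have hvar := variance_eq_sub (memLp_psi_comp hτ.le (h1.1.const_add b) 2)
  simp only [Pi.pow_apply] at hvar
  rw [← hvar]
  refine ⟨?_, variance_psi_add_le hbτ.le h1.1 h2⟩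
  have hmoments : 0 ≤ (∫ ω, ε ω ^ 4 ∂μ) + (∫ ω, ε ω ^ 2 ∂μ) ^ 2 :=
    add_nonneg (integral_nonneg fun ω => by positivity) (sq_nonneg _)
  have hs : τ / 2 ≤ τ - |b| := by linarith
  calc (∫ ω, ε ω ^ 2 ∂μ) - 4 * ((∫ ω, ε ω ^ 4 ∂μ) + (∫ ω, ε ω ^ 2 ∂μ) ^ 2) / τ ^ 2
      = (∫ ω, ε ω ^ 2 ∂μ) - ((∫ ω, ε ω ^ 4 ∂μ) + (∫ ω, ε ω ^ 2 ∂μ) ^ 2) / (τ / 2) ^ 2 := by ring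
    _ ≤ (∫ ω, ε ω ^ 2 ∂μ) - ((∫ ω, ε ω ^ 4 ∂μ) + (∫ ω, ε ω ^ 2 ∂μ) ^ 2) / (τ - |b|) ^ 2 := by
      gcongr
    _ ≤ Var[fun ω => psi τ (b + ε ω); μ] :=
      integral_sq_sub_div_le_variance_psi_add hbτ h1 h2 h4 hzero

theorem stmt16 {Ω : Type*} [MeasurableSpace Ω] (μ : Measure Ω) [IsProbabilityMeasure μ]
    (ε : Ω → ℝ) (hmeas : Measurable ε)
    (h1 : Integrable ε μ) (h2 : Integrable (fun ω => (ε ω) ^ 2) μ)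
    (h4 : Integrable (fun ω => (ε ω) ^ 4) μ)
    (hzero : ∫ ω, ε ω ∂μ = 0)
    (τ b : ℝ) (hτ : 0 < τ) (hb : |b| ≤ τ / 2) :
    (∫ ω, (ε ω) ^ 2 ∂μ) - 4 * ((∫ ω, (ε ω) ^ 4 ∂μ) + (∫ ω, (ε ω) ^ 2 ∂μ) ^ 2) / τ ^ 2
        ≤ (∫ ω, (psi τ (b + ε ω)) ^ 2 ∂μ) - (∫ ω, psi τ (b + ε ω) ∂μ) ^ 2 ∧
      (∫ ω, (psi τ (b + ε ω)) ^ 2 ∂μ) - (∫ ω, psi τ (b + ε ω) ∂μ) ^ 2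
        ≤ ∫ ω, (ε ω) ^ 2 ∂μ :=
  stmt16_general μ ε h1 h2 h4 hzero τ b hτ hb
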